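/- Let V be a finite-dimensional real vector space, B a nondegenerate symmetric bilinear form on V, c a negative real number, and A : V → V a linear map that is skew-adjoint with respect to B and satisfies B(Ax, Ay) = c · B(x, y) for all x, y ∈ V. Then every eigenvalue λ ∈ ℂ of the complexification of A is real (has imaginary part zero). In particular, for a pseudo-H-type Lie algebra and a central element Z with ⟨Z, Z⟩ < 0, all eigenvalues of j(Z) are real, so the corresponding equilibrium of the Lie-Poisson equation is unstable. -/

import Mathlib

/-!
Skew-adjointness turns `B (A x) (A y) = c * B x y` into `B (A² x) y = -c * B x y`, so by
nondegeneracy `A² = -c`. Hence every eigenvalue `μ` of the complexification satisfies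
`μ² = -c > 0`, which forces `μ` to be real.
-/

theorem Module.End.sq_eq_neg_smul_one_of_skewAdjoint {R M : Type*} [CommRing R]
    [AddCommGroup M] [Module R M] {B : M →ₗ[R] M →ₗ[R] R} (hB : B.SeparatingLeft)
    {c : R} {A : Module.End R M} (hskew : ∀ x y, B (A x) y = -B x (A y))
    (hAc : ∀ x y, B (A x) (A y) = c * B x y) :
    A ^ 2 = (-c) • 1 := by
  ext x
  refine sub_eq_zero.1 (hB _ fun y => ?_)
  simp [sq, hskew (A x), hAc]

theorem spectrum.eq_of_mem_algebraMap {𝕜 A : Type*} [Field 𝕜] [Ring A] [Algebra 𝕜 A]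
    {k r : 𝕜} (hk : k ∈ spectrum 𝕜 (algebraMap 𝕜 A r)) : k = r := by
  by_contra hne
  rw [spectrum.mem_iff, ← map_sub] at hk
  exact hk ((sub_ne_zero.2 hne).isUnit.map _)

theorem spectrum.sq_eq_of_sq_eq_algebraMap {𝕜 A : Type*} [Field 𝕜] [Ring A] [Algebra 𝕜 A]
    {a : A} {r : 𝕜} (ha : a ^ 2 = algebraMap 𝕜 A r) {k : 𝕜} (hk : k ∈ spectrum 𝕜 a) :
    k ^ 2 = r :=
  spectrum.eq_of_mem_algebraMap (ha ▸ spectrum.pow_mem_pow a 2 hk)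

theorem Complex.im_eq_zero_of_sq_eq_ofReal {μ : ℂ} {r : ℝ} (hr : 0 ≤ r) (h : μ ^ 2 = r) :
    μ.im = 0 := by
  have hre := congrArg Complex.re h
  have him := congrArg Complex.im h
  simp only [sq, Complex.mul_re, Complex.mul_im, Complex.ofReal_re, Complex.ofReal_im] at hre him
  rcases mul_eq_zero.1 (by linarith : 2 * μ.re * μ.im = 0) with h0 | h0
  · nlinarith [mul_eq_zero.1 h0]
  · exact h0

theorem spectrum_real_of_pseudoH_neg_general (V : Type*) [AddCommGroup V]
    [Module ℝ V]
    (B : V →ₗ[ℝ] V →ₗ[ℝ] ℝ)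
    (hnd : ∀ x : V, (∀ y : V, B x y = 0) → x = 0)
    (c : ℝ) (hc : c < 0) (A : V →ₗ[ℝ] V)
    (hskew : ∀ x y : V, B (A x) y = -B x (A y))
    (hAc : ∀ x y : V, B (A x) (A y) = c * B x y) :
    ∀ μ ∈ spectrum ℂ (A.baseChange ℂ), μ.im = 0 := by
  intro μ hμ
  have hA2 : A ^ 2 = (-c) • 1 := Module.End.sq_eq_neg_smul_one_of_skewAdjoint hnd hskew hAc
  have hT2 : A.baseChange ℂ ^ 2 = algebraMap ℂ _ ((-c : ℝ) : ℂ) := by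
    rw [← LinearMap.baseChange_pow, hA2, LinearMap.baseChange_smul, LinearMap.baseChange_one,
      Algebra.algebraMap_eq_smul_one, Complex.coe_smul]
    -- the two `ℝ`-actions on `Module.End ℂ (ℂ ⊗[ℝ] V)` agree only up to unfolding
    rfl
  exact Complex.im_eq_zero_of_sq_eq_ofReal (by linarith)
    (spectrum.sq_eq_of_sq_eq_algebraMap hT2 hμ)

/-- If `A` is skew-adjoint with respect to a nondegenerate symmetric bilinear
form `B` on a finite-dimensional real vector space and satisfies
`B (A x) (A y) = c * B x y` with `c < 0` (as the `j`-mapping `j(Z)` of a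
pseudo-`H`-type Lie algebra at a central element with `⟨Z, Z⟩ = c < 0` does),
then every eigenvalue of the complexification of `A` is real. -/
theorem spectrum_real_of_pseudoH_neg (V : Type*) [AddCommGroup V]
    [Module ℝ V] [FiniteDimensional ℝ V]
    (B : V →ₗ[ℝ] V →ₗ[ℝ] ℝ)
    (hsymm : ∀ x y : V, B x y = B y x)
    (hnd : ∀ x : V, (∀ y : V, B x y = 0) → x = 0)
    (c : ℝ) (hc : c < 0) (A : V →ₗ[ℝ] V)
    (hskew : ∀ x y : V, B (A x) y = -B x (A y))
    (hAc : ∀ x y : V, B (A x) (A y) = c * B x y) :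
    ∀ μ ∈ spectrum ℂ (A.baseChange ℂ), μ.im = 0 :=
  spectrum_real_of_pseudoH_neg_general V B hnd c hc A hskew hAc
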